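/- If (α,γ) is an abelian 3-cocycle on an abelian group G with values in k^×, then the function q(g) = γ(g,g) is a quadratic function: q(g⁻¹) = q(g) and q(f)q(g)q(h)q(fgh) = q(fg)q(fh)q(gh) for all f,g,h ∈ G. -/
import Mathlib


/-- If `(α, γ)` is an abelian 3-cocycle (Eilenberg–Mac Lane) on an abelian group `G`
with values in `kˣ` — i.e. `α` is a 3-cocycle and `(α, γ)` satisfies the two hexagon
equations — then `q(g) := γ(g,g)` is a quadratic function: `q(g⁻¹) = q(g)` and
`q(f)·q(g)·q(h)·q(fgh) = q(fg)·q(fh)·q(gh)`. -/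
theorem abelian_three_cocycle_diagonal_quadratic
    {G : Type*} [CommGroup G] {k : Type*} [Field k]
    (α : G → G → G → kˣ) (γ : G → G → kˣ)
    (hα : ∀ f g h l : G,
      α g h l * α f (g * h) l * α f g h = α (f * g) h l * α f g (h * l))
    (hex1 : ∀ f g h : G,
      α f g h * γ f (g * h) * α g h f = γ f g * α g f h * γ f h)
    (hex2 : ∀ f g h : G,
      (α f g h)⁻¹ * γ (f * g) h * (α h f g)⁻¹ = γ g h * (α f h g)⁻¹ * γ f h) :
    (∀ g : G, γ g⁻¹ g⁻¹ = γ g g) ∧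
    (∀ f g h : G,
      γ f f * γ g g * γ h h * γ (f * g * h) (f * g * h) =
        γ (f * g) (f * g) * γ (f * h) (f * h) * γ (g * h) (g * h)) := by
  -- coerced versions of the hypotheses, in `k`
  have hα' : ∀ f g h l : G, (α g h l : k) * α f (g * h) l * α f g h =
      α (f * g) h l * α f g (h * l) := fun f g h l => by exact_mod_cast hα f g h l
  have hex1' : ∀ f g h : G, (α f g h : k) * γ f (g * h) * α g h f =
      γ f g * α g f h * γ f h := fun f g h => by exact_mod_cast hex1 f g h
  have hex2' : ∀ f g h : G, ((α f g h : k))⁻¹ * γ (f * g) h * ((α h f g : k))⁻¹ =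
      γ g h * ((α f h g : k))⁻¹ * γ f h := fun f g h => by exact_mod_cast hex2 f g h
  -- closed form for γ f (g*h)
  have hc' : ∀ f g h : G, (γ f (g * h) : k) =
      γ f g * γ f h * α g f h / (α f g h * α g h f) := by
    intro f g h
    field_simp
    linear_combination hex1' f g h
  -- closed form for γ (f*g) h
  have hd' : ∀ f g h : G, (γ (f * g) h : k) =
      γ g h * γ f h * (α f g h * α h f g) / α f h g := by
    intro f g h
    have H := hex2' f g h
    field_simp at H ⊢
    linear_combination H
  -- bilinearity of B(f,g) = γ f g * γ g f
  have hBl : ∀ f g h : G, (γ f (g * h) : k) * γ (g * h) f =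
      (γ f g * γ g f) * (γ f h * γ h f) := by
    intro f g h
    rw [hc' f g h, hd' g h f]
    field_simp
  have hBr : ∀ f g h : G, (γ (f * g) h : k) * γ h (f * g) =
      (γ f h * γ h f) * (γ g h * γ h g) := by
    intro f g h
    rw [hd' f g h, hc' h f g]
    field_simp
  -- q(fg) = q(f) q(g) B(f,g)
  have hq : ∀ f g : G, (γ (f * g) (f * g) : k) =
      γ f f * γ g g * (γ f g * γ g f) := by
    intro f g
    have hcoc := hα' f g f g
    rw [mul_comm g f] at hcoc
    have hAfg : (α f (f * g) g : k) =
        α (f * g) f g * α f g (f * g) / (α g f g * α f g f) := by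
      field_simp
      linear_combination hcoc
    rw [hd' f g (f * g), hc' g f g, hc' f f g, hAfg]
    field_simp
  -- B(g,1) = 1
  have hBg1 : ∀ g : G, (γ g 1 : k) * γ 1 g = 1 := by
    intro g
    have H := hBl g 1 1
    rw [one_mul] at H
    have hne : ((γ g 1 : k) * γ 1 g) ≠ 0 :=
      mul_ne_zero (Units.ne_zero _) (Units.ne_zero _)
    have : ((γ g 1 : k) * γ 1 g) * 1 = ((γ g 1 : k) * γ 1 g) * ((γ g 1 : k) * γ 1 g) := by
      rw [mul_one]; exact H
    exact (mul_left_cancel₀ hne this).symm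
  -- q(1) = 1
  have hq1 : (γ (1 : G) 1 : k) = 1 := by
    have H := hq 1 1
    rw [one_mul] at H
    have hB11 := hBg1 (1 : G)
    rw [hB11, mul_one] at H
    exact H
  constructor
  · intro g
    apply Units.ext
    have e1 := hq g g⁻¹
    rw [mul_inv_cancel] at e1
    rw [hq1] at e1
    have e2 := hBl g g g⁻¹
    rw [mul_inv_cancel] at e2
    rw [hBg1 g] at e2
    -- e1 : 1 = γ g g * γ g⁻¹ g⁻¹ * (γ g g⁻¹ * γ g⁻¹ g)
    -- e2 : 1 = (γ g g * γ g g) * (γ g g⁻¹ * γ g⁻¹ g)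
    have key : (γ g g : k) * γ g⁻¹ g⁻¹ * ((γ g g⁻¹ : k) * γ g⁻¹ g) =
        (γ g g : k) * γ g g * ((γ g g⁻¹ : k) * γ g⁻¹ g) := by
      rw [← e1]
      linear_combination e2
    have hX : ((γ g g⁻¹ : k) * γ g⁻¹ g) ≠ 0 :=
      mul_ne_zero (Units.ne_zero _) (Units.ne_zero _)
    have key2 := mul_right_cancel₀ hX key
    have hg : ((γ g g : k)) ≠ 0 := Units.ne_zero _
    exact mul_left_cancel₀ hg key2
  · intro f g h
    apply Units.ext
    push_cast
    rw [show f * g * h = (f * g) * h from rfl, hq (f * g) h, hq f g, hq f h, hq g h,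
      hBr f g h]
    ring
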